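/- arXiv:2408.03803 — 3 statements merged into one kernel-verified Lean document; each statement's English description precedes it below -/
import Mathlib

section
/- If X is Poisson with parameter λ and Y is Poisson with parameter λ′ where 0 < λ < λ′ < 1, then d_TV(X,Y) = e^{−λ} − e^{−λ′} ≤ λ′ − λ. -/
/-!
Since `x ↦ x e^{-x}` is increasing on `[0, 1]`, so is every Poisson weight `e^{-x} x^k / k!` with
`k ≥ 1`. Hence `P(X = k) ≤ P(Y = k)` for all `k ≥ 1`, and as both mass functions sum to `1`, the
whole excess of `X` over `Y` sits at `k = 0`: the `ℓ¹`-distance is `2 (e^{-λ} - e^{-λ'})`.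
The bound holds because `e^{-x}` is `1`-Lipschitz on `[0, ∞)`.
-/

open Real

theorem hasSum_exp_neg_mul_pow_div_factorial (r : ℝ) :
    HasSum (fun k : ℕ ↦ exp (-r) * r ^ k / k.factorial) 1 := by
  have h := (NormedSpace.expSeries_div_hasSum_exp r).mul_left (exp (-r))
  simp_rw [← mul_div_assoc] at h
  rwa [← exp_eq_exp_ℝ, ← exp_add, neg_add_cancel, exp_zero] at h

theorem mul_exp_neg_le_mul_exp_neg {r s : ℝ} (hr : 0 ≤ r) (hrs : r ≤ s) (hs : s ≤ 1) :
    r * exp (-r) ≤ s * exp (-s) := by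
  have hexp : exp (-s) = exp (-r) * exp (r - s) := by rw [← exp_add]; ring_nf
  have hlin : 1 + (r - s) ≤ exp (r - s) := by linarith [add_one_le_exp (r - s)]
  -- `s (1 + r - s) - r = (s - r)(1 - s) ≥ 0`
  have hpoly : r ≤ s * (1 + (r - s)) := by nlinarith
  calc r * exp (-r) ≤ s * (1 + (r - s)) * exp (-r) := by gcongr
    _ ≤ s * exp (r - s) * exp (-r) := by gcongr; linarith
    _ = s * exp (-s) := by rw [hexp]; ring

theorem exp_neg_sub_exp_neg_le {r s : ℝ} (hr : 0 ≤ r) (hrs : r ≤ s) :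
    exp (-r) - exp (-s) ≤ s - r := by
  have hexp : exp (-s) = exp (-r) * exp (r - s) := by rw [← exp_add]; ring_nf
  have hlin : 1 + (r - s) ≤ exp (r - s) := by linarith [add_one_le_exp (r - s)]
  have hle_one : exp (-r) ≤ 1 := exp_le_one_iff.mpr (by linarith)
  calc exp (-r) - exp (-s) ≤ exp (-r) - exp (-r) * (1 + (r - s)) := by
        rw [hexp]; gcongr
    _ = exp (-r) * (s - r) := by ring
    _ ≤ s - r := mul_le_of_le_one_left (by linarith) hle_one

theorem hasSum_abs_sub_of_succ_le {a b : ℕ → ℝ} {s : ℝ} (ha : HasSum a s) (hb : HasSum b s)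
    (hle : ∀ k, a (k + 1) ≤ b (k + 1)) :
    HasSum (fun k ↦ |a k - b k|) (2 * (a 0 - b 0)) := by
  have htail : HasSum (fun k ↦ b (k + 1) - a (k + 1)) (a 0 - b 0) := by
    have h := ((hasSum_nat_add_iff' 1).mpr hb).sub ((hasSum_nat_add_iff' 1).mpr ha)
    rwa [Finset.sum_range_one, Finset.sum_range_one, sub_sub_sub_cancel_left] at h
  have hdefect : 0 ≤ a 0 - b 0 := htail.nonneg fun k ↦ sub_nonneg.mpr (hle k)
  have habs : (fun k ↦ |a (k + 1) - b (k + 1)|) = fun k ↦ b (k + 1) - a (k + 1) :=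
    funext fun k ↦ by rw [abs_sub_comm, abs_of_nonneg (sub_nonneg.mpr (hle k))]
  rw [← hasSum_nat_add_iff' 1, Finset.sum_range_one, abs_of_nonneg hdefect, two_mul,
    add_sub_cancel_right, habs]
  exact htail

theorem exp_neg_mul_pow_div_factorial_succ_le {r s : ℝ} (hr : 0 ≤ r) (hrs : r ≤ s) (hs : s ≤ 1)
    (k : ℕ) :
    exp (-r) * r ^ (k + 1) / (k + 1).factorial ≤ exp (-s) * s ^ (k + 1) / (k + 1).factorial := by
  gcongr ?_ / _
  calc exp (-r) * r ^ (k + 1) = r * exp (-r) * r ^ k := by ring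
    _ ≤ s * exp (-s) * s ^ k :=
        mul_le_mul (mul_exp_neg_le_mul_exp_neg hr hrs hs) (pow_le_pow_left₀ hr hrs k)
          (pow_nonneg hr k) (mul_nonneg (hr.trans hrs) (exp_pos _).le)
    _ = exp (-s) * s ^ (k + 1) := by ring

/-- For Poisson variables with parameters `0 < λ < λ' < 1`, the total variation
distance equals `e^{-λ} - e^{-λ'}`, which is at most `λ' - λ`. -/
theorem stmt_3 (lam lam' : ℝ) (h0 : 0 < lam) (h1 : lam < lam') (h2 : lam' < 1) :
    (1 / 2) * (∑' k : ℕ, |Real.exp (-lam) * lam ^ k / (Nat.factorial k)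
        - Real.exp (-lam') * lam' ^ k / (Nat.factorial k)|)
      = Real.exp (-lam) - Real.exp (-lam')
    ∧ Real.exp (-lam) - Real.exp (-lam') ≤ lam' - lam := by
  have hdist := hasSum_abs_sub_of_succ_le (hasSum_exp_neg_mul_pow_div_factorial lam)
    (hasSum_exp_neg_mul_pow_div_factorial lam')
    (exp_neg_mul_pow_div_factorial_succ_le h0.le h1.le h2.le)
  refine ⟨?_, exp_neg_sub_exp_neg_le h0.le h1.le⟩
  rw [hdist.tsum_eq]
  simp
end

section
/- There is an absolute constant C such that if X is Poisson with parameter λ and Y is Poisson with parameter λ′ with 0 < λ < λ′, then d_TV(X,Y) ≤ C (λ′ − λ)/(1 + √λ). -/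
/-!
Differentiating in the parameter, `∂ₜ p_t(k) = (k - t) p_t(k) / t`, so the `ℓ¹`-norm of the
derivative is `E|N - t| / t` for `N ~ Poisson(t)`. Since `Var N = t`, AM-GM bounds this by
`1 / √t`, and trivially it is at most `2`; together, at most `3 / (1 + √t)`. The mean value
inequality in `ℓ¹` then gives `∑ₖ |p_λ(k) - p_λ'(k)| ≤ 3 (λ' - λ) / (1 + √λ)`.
-/

open Real Finset Set

section MeanValue

variable {ι : Type*} {f f' : ι → ℝ → ℝ} {a b C : ℝ}

theorem sum_abs_sub_le_of_hasDerivAt (s : Finset ι) (hab : a ≤ b)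
    (hf : ∀ i ∈ s, ∀ t ∈ Icc a b, HasDerivAt (f i) (f' i t) t)
    (hC : ∀ t ∈ Icc a b, ∑ i ∈ s, |f' i t| ≤ C) :
    ∑ i ∈ s, |f i b - f i a| ≤ C * (b - a) := by
  -- freezing the signs at the endpoints turns the ℓ¹-distance into an increment of one function
  set ε : ι → ℝ := fun i => SignType.sign (f i b - f i a)
  have hε : ∀ σ : SignType, |(σ : ℝ)| ≤ 1 := fun σ => by cases σ <;> simp
  have hderiv : ∀ t ∈ Icc a b, HasDerivAt (fun u => ∑ i ∈ s, ε i * f i u)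
      (∑ i ∈ s, ε i * f' i t) t :=
    fun t ht => HasDerivAt.fun_sum fun i hi => (hf i hi t ht).const_mul (ε i)
  have hbound : ∀ t ∈ Ico a b, ‖∑ i ∈ s, ε i * f' i t‖ ≤ C := fun t ht =>
    calc ‖∑ i ∈ s, ε i * f' i t‖ ≤ ∑ i ∈ s, |ε i * f' i t| := norm_sum_le _ _
      _ ≤ ∑ i ∈ s, |f' i t| := sum_le_sum fun i _ => by
          rw [abs_mul]; exact mul_le_of_le_one_left (abs_nonneg _) (hε _)
      _ ≤ C := hC t (Ico_subset_Icc_self ht)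
  have hmvt := norm_image_sub_le_of_norm_deriv_le_segment'
    (fun t ht => (hderiv t ht).hasDerivWithinAt) hbound b (right_mem_Icc.2 hab)
  calc ∑ i ∈ s, |f i b - f i a| = ∑ i ∈ s, ε i * f i b - ∑ i ∈ s, ε i * f i a := by
        rw [← sum_sub_distrib]
        exact sum_congr rfl fun i _ => by rw [← mul_sub, sign_mul_self]
    _ ≤ C * (b - a) := (le_abs_self _).trans hmvt

theorem tsum_abs_sub_le_of_hasDerivAt (hab : a ≤ b)
    (hf : ∀ i, ∀ t ∈ Icc a b, HasDerivAt (f i) (f' i t) t)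
    (hsum : ∀ t ∈ Icc a b, Summable fun i => |f' i t|)
    (hC : ∀ t ∈ Icc a b, ∑' i, |f' i t| ≤ C) :
    ∑' i, |f i b - f i a| ≤ C * (b - a) :=
  Real.tsum_le_of_sum_le (fun _ => abs_nonneg _) fun s =>
    sum_abs_sub_le_of_hasDerivAt s hab (fun i _ => hf i) fun t ht =>
      ((hsum t ht).sum_le_tsum s fun _ _ => abs_nonneg _).trans (hC t ht)

end MeanValue

-- Mathlib's `poissonPMFReal` takes an `ℝ≥0` parameter; here the parameter must range over `ℝ`
-- so that we can differentiate in it.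
noncomputable def poissonWeight (t : ℝ) (k : ℕ) : ℝ := exp (-t) * t ^ k / k.factorial

section Poisson

variable {t : ℝ}

theorem poissonWeight_nonneg (ht : 0 ≤ t) (k : ℕ) : 0 ≤ poissonWeight t k := by
  unfold poissonWeight; positivity

theorem succ_mul_poissonWeight_succ (t : ℝ) (k : ℕ) :
    (k + 1 : ℝ) * poissonWeight t (k + 1) = t * poissonWeight t k := by
  simp only [poissonWeight, Nat.factorial_succ, Nat.cast_mul, Nat.cast_succ, pow_succ]
  field_simp

theorem hasSum_poissonWeight (t : ℝ) : HasSum (poissonWeight t) 1 := by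
  have := (NormedSpace.expSeries_div_hasSum_exp t).mul_left (exp (-t))
  rw [← Real.exp_eq_exp_ℝ, ← exp_add, neg_add_cancel, exp_zero] at this
  exact this.congr_fun fun k => mul_div_assoc _ _ _

theorem hasSum_mul_poissonWeight (t : ℝ) : HasSum (fun k : ℕ => k * poissonWeight t k) t := by
  rw [← hasSum_nat_add_iff' 1]
  simpa [succ_mul_poissonWeight_succ] using (hasSum_poissonWeight t).mul_left t

theorem hasSum_mul_sub_one_mul_poissonWeight (t : ℝ) :
    HasSum (fun k : ℕ => k * (k - 1) * poissonWeight t k) (t ^ 2) := by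
  refine (hasSum_nat_add_iff' 2).1 ?_
  have h (k : ℕ) : ((k + 2 : ℕ) : ℝ) * ((k + 2 : ℕ) - 1) * poissonWeight t (k + 2)
      = t ^ 2 * poissonWeight t k := by
    have h1 := succ_mul_poissonWeight_succ t k
    have h2 := succ_mul_poissonWeight_succ t (k + 1)
    push_cast at h1 h2 ⊢
    linear_combination (k + 1 : ℝ) * h2 + t * h1
  simp only [h, sum_range_succ, sum_range_zero]
  simpa using (hasSum_poissonWeight t).mul_left (t ^ 2)

theorem hasSum_sq_sub_mul_poissonWeight (t : ℝ) :
    HasSum (fun k : ℕ => (k - t) ^ 2 * poissonWeight t k) t := by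
  convert ((hasSum_mul_sub_one_mul_poissonWeight t).add
    ((hasSum_mul_poissonWeight t).mul_left (1 - 2 * t))).add
    ((hasSum_poissonWeight t).mul_left (t ^ 2)) using 1
  · ext k; ring
  · ring

theorem hasDerivAt_poissonWeight (k : ℕ) (ht : t ≠ 0) :
    HasDerivAt (fun s => poissonWeight s k) ((k - t) * poissonWeight t k / t) t := by
  refine (((hasDerivAt_neg t).exp.fun_mul (hasDerivAt_pow k t)).div_const
    (k.factorial : ℝ)).congr_deriv ?_
  cases k with
  | zero => simp [poissonWeight, neg_div, mul_div_cancel_left₀ _ ht]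
  | succ k =>
    simp only [poissonWeight, pow_succ, Nat.add_sub_cancel]
    field_simp
    push_cast
    ring

theorem abs_sub_mul_poissonWeight_le (ht : 0 ≤ t) (k : ℕ) :
    |k - t| * poissonWeight t k ≤ k * poissonWeight t k + t * poissonWeight t k := by
  rw [← add_mul]
  refine mul_le_mul_of_nonneg_right ?_ (poissonWeight_nonneg ht k)
  exact (abs_sub _ _).trans_eq (by rw [Nat.abs_cast, abs_of_nonneg ht])

theorem summable_abs_sub_mul_poissonWeight (ht : 0 ≤ t) :
    Summable fun k : ℕ => |k - t| * poissonWeight t k :=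
  ((hasSum_mul_poissonWeight t).add ((hasSum_poissonWeight t).mul_left t)).summable.of_nonneg_of_le
    (fun k => mul_nonneg (abs_nonneg _) (poissonWeight_nonneg ht k))
    (abs_sub_mul_poissonWeight_le ht)

theorem tsum_abs_sub_mul_poissonWeight_le_sqrt (ht : 0 < t) :
    ∑' k : ℕ, |k - t| * poissonWeight t k ≤ √t := by
  set s := √t
  have hs0 : 0 < s := sqrt_pos.2 ht
  have hst : s ^ 2 = t := sq_sqrt ht.le
  -- AM-GM, `|x| ≤ x² / (2s) + s / 2`, turns the variance identity into the bound
  have hsum := ((hasSum_sq_sub_mul_poissonWeight t).div_const (2 * s)).add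
    ((hasSum_poissonWeight t).mul_left (s / 2))
  rw [show t / (2 * s) + s / 2 * 1 = s by rw [← hst]; field_simp; ring] at hsum
  refine ((summable_abs_sub_mul_poissonWeight ht.le).tsum_le_tsum (fun k => ?_)
    hsum.summable).trans_eq hsum.tsum_eq
  have hamgm : 2 * |(k : ℝ) - t| * s ≤ (k - t) ^ 2 + s ^ 2 := by
    simpa only [sq_abs] using two_mul_le_add_sq |(k : ℝ) - t| s
  rw [div_add' _ _ _ (by positivity), le_div_iff₀ (by positivity)]
  nlinarith [poissonWeight_nonneg ht.le k]

theorem tsum_abs_sub_mul_poissonWeight_le_two_mul (ht : 0 ≤ t) :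
    ∑' k : ℕ, |k - t| * poissonWeight t k ≤ 2 * t := by
  have hsum := (hasSum_mul_poissonWeight t).add ((hasSum_poissonWeight t).mul_left t)
  exact ((summable_abs_sub_mul_poissonWeight ht).tsum_le_tsum (abs_sub_mul_poissonWeight_le ht)
    hsum.summable).trans_eq (by rw [hsum.tsum_eq]; ring)

theorem tsum_abs_sub_mul_poissonWeight_le (ht : 0 < t) :
    ∑' k : ℕ, |k - t| * poissonWeight t k ≤ 3 * t / (1 + √t) := by
  have hs0 := sqrt_nonneg t
  have hst : √t ^ 2 = t := sq_sqrt ht.le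
  rw [le_div_iff₀ (by positivity)]
  rcases le_total (√t) (1 / 2) with hs | hs
  · nlinarith [tsum_abs_sub_mul_poissonWeight_le_two_mul ht.le]
  · nlinarith [tsum_abs_sub_mul_poissonWeight_le_sqrt ht]

theorem tsum_abs_sub_poissonWeight_le {a b : ℝ} (ha : 0 < a) (hab : a ≤ b) :
    ∑' k, |poissonWeight a k - poissonWeight b k| ≤ 3 * (b - a) / (1 + √a) := by
  have hpos : ∀ t ∈ Icc a b, 0 < t := fun t ht => ha.trans_le ht.1
  have habs : ∀ t ∈ Icc a b, ∀ k : ℕ,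
      |(k - t) * poissonWeight t k / t| = |k - t| * poissonWeight t k / t := fun t ht k => by
    rw [abs_div, abs_mul, abs_of_nonneg (poissonWeight_nonneg (hpos t ht).le k),
      abs_of_pos (hpos t ht)]
  rw [mul_div_right_comm]
  simp_rw [abs_sub_comm (poissonWeight a _)]
  refine tsum_abs_sub_le_of_hasDerivAt hab
    (fun k t ht => hasDerivAt_poissonWeight k (hpos t ht).ne') (fun t ht => ?_) fun t ht => ?_
  · simpa only [habs t ht] using (summable_abs_sub_mul_poissonWeight (hpos t ht).le).div_const t
  · calc ∑' k : ℕ, |(k - t) * poissonWeight t k / t|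
        = (∑' k : ℕ, |k - t| * poissonWeight t k) / t := by
          simp only [habs t ht, tsum_div_const]
      _ ≤ 3 * t / (1 + √t) / t := by
          gcongr; exacts [(hpos t ht).le, tsum_abs_sub_mul_poissonWeight_le (hpos t ht)]
      _ = 3 / (1 + √t) := by field_simp [(hpos t ht).ne']
      _ ≤ 3 / (1 + √a) := by gcongr; exact ht.1

end Poisson

/-- There is an absolute constant `C` such that for Poisson parameters
`0 < λ < λ'`, the total variation distance between `Poisson(λ)` and
`Poisson(λ')` is at most `C (λ' - λ)/(1 + √λ)`. -/
theorem stmt_5 :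
    ∃ C : ℝ, 0 < C ∧ ∀ lam lam' : ℝ, 0 < lam → lam < lam' →
      (1 / 2) * (∑' k : ℕ, |Real.exp (-lam) * lam ^ k / (Nat.factorial k)
          - Real.exp (-lam') * lam' ^ k / (Nat.factorial k)|)
        ≤ C * (lam' - lam) / (1 + Real.sqrt lam) := by
  refine ⟨3 / 2, by norm_num, fun lam lam' hlam hlt => ?_⟩
  calc (1 / 2) * ∑' k, |poissonWeight lam k - poissonWeight lam' k|
      ≤ (1 / 2) * (3 * (lam' - lam) / (1 + √lam)) := by
        gcongr; exact tsum_abs_sub_poissonWeight_le hlam hlt.le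
    _ = 3 / 2 * (lam' - lam) / (1 + √lam) := by ring
end

section
/- Let T be a finite set of odd primes and W_q (q ∈ T) independent with P(W_q = 0) = 1 − 1/(q−1), P(W_q = v) = 1/q^v for v ≥ 1. Let R_T = #{q ∈ T : W_q ≥ 1} and let Z be a Poisson random variable with parameter H_1(T) = Σ_{q∈T} 1/(q−1). Then d_TV(R_T, Z) ≪ H_2(T)/(1 + H_1(T)) with absolute implied constant, where H_2(T) = Σ_{q∈T} 1/q². -/
/-!
`R_T` is a sum of independent Bernoulli variables with parameters `p_q = 1/(q-1)`, summing to
`λ = H₁(T)`. By the Stein–Chen method (Barbour–Hall), for every finite `A ⊆ ℕ`,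
`P(R_T ∈ A) - P(Z ∈ A) = 𝔼[λ g_A(R_T + 1) - R_T g_A(R_T)]` where `g_A` solves the Poisson Stein
equation for `𝟙_A`; conditioning on each summand turns the right side into
`∑ p_q² 𝔼[Δg_A(·)]`, and the increments of `g_A` are at most `(1 - e^{-λ})/λ ≤ 2/(1+λ)`. Since
`p_q² ≤ (9/4)/q²` for `q ≥ 3`, this gives the bound with constant `9/2`.
-/

open Real Finset

namespace SteinChen

noncomputable def poissonProb (lam : ℝ) (k : ℕ) : ℝ := exp (-lam) * lam ^ k / k.factorial

noncomputable def poissonCDF (lam : ℝ) (j : ℕ) : ℝ := ∑ i ∈ range (j + 1), poissonProb lam i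

variable {lam : ℝ}

lemma poissonProb_pos (hlam : 0 < lam) (k : ℕ) : 0 < poissonProb lam k := by
  unfold poissonProb; positivity

lemma poissonProb_nonneg (hlam : 0 ≤ lam) (k : ℕ) : 0 ≤ poissonProb lam k := by
  unfold poissonProb; positivity

lemma poissonProb_zero_right (lam : ℝ) : poissonProb lam 0 = exp (-lam) := by
  simp [poissonProb]

lemma succ_mul_poissonProb_succ (lam : ℝ) (k : ℕ) :
    (k + 1) * poissonProb lam (k + 1) = lam * poissonProb lam k := by
  simp only [poissonProb, Nat.factorial_succ, Nat.cast_mul, pow_succ]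
  field_simp
  push_cast
  ring

lemma hasSum_poissonProb (lam : ℝ) : HasSum (poissonProb lam) 1 := by
  have h := (NormedSpace.expSeries_div_hasSum_exp lam).mul_left (exp (-lam))
  rw [← Real.exp_eq_exp_ℝ, ← Real.exp_add, neg_add_cancel, Real.exp_zero] at h
  exact h.congr_fun fun k => mul_div_assoc _ _ _

lemma poissonCDF_succ (lam : ℝ) (j : ℕ) :
    poissonCDF lam (j + 1) = poissonCDF lam j + poissonProb lam (j + 1) :=
  sum_range_succ _ _

lemma one_sub_poissonCDF (lam : ℝ) (j : ℕ) :
    1 - poissonCDF lam j = ∑' i, poissonProb lam (i + (j + 1)) := by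
  rw [← (hasSum_poissonProb lam).tsum_eq,
    ← (hasSum_poissonProb lam).summable.sum_add_tsum_nat_add (j + 1), poissonCDF]
  ring

lemma mul_poissonCDF_le (hlam : 0 ≤ lam) (j : ℕ) :
    lam * poissonCDF lam j ≤ (j + 1) * (poissonCDF lam (j + 1) - poissonProb lam 0) := by
  rw [poissonCDF, poissonCDF, sum_range_succ' _ (j + 1), add_sub_cancel_right,
    mul_sum, mul_sum]
  refine sum_le_sum fun i hi => ?_
  have hij : (i : ℝ) + 1 ≤ j + 1 := by exact_mod_cast Nat.succ_le_succ (mem_range_succ_iff.1 hi)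
  rw [← succ_mul_poissonProb_succ]
  exact mul_le_mul_of_nonneg_right hij (poissonProb_nonneg hlam _)

lemma succ_mul_one_sub_poissonCDF_le (hlam : 0 ≤ lam) (j : ℕ) :
    (j + 1) * (1 - poissonCDF lam (j + 1)) ≤ lam * (1 - poissonCDF lam j) := by
  have hsum (n : ℕ) : Summable fun i => poissonProb lam (i + n) :=
    (summable_nat_add_iff n).2 (hasSum_poissonProb lam).summable
  rw [one_sub_poissonCDF, one_sub_poissonCDF, ← tsum_mul_left, ← tsum_mul_left]
  refine (hsum _).mul_left _ |>.tsum_le_tsum (fun i => ?_) ((hsum _).mul_left _)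
  have hji : (j : ℝ) + 1 ≤ ↑(i + (j + 1)) + 1 := by push_cast; linarith [i.cast_nonneg (α := ℝ)]
  calc (j + 1 : ℝ) * poissonProb lam (i + (j + 1 + 1))
      ≤ (↑(i + (j + 1)) + 1) * poissonProb lam (i + (j + 1) + 1) :=
        mul_le_mul_of_nonneg_right hji (poissonProb_nonneg hlam _)
    _ = lam * poissonProb lam (i + (j + 1)) := succ_mul_poissonProb_succ _ _

/-- Solves the Stein equation `λ g(j+1) - j g(j) = 𝟙{j = m} - P(Z = m)` for `Z ~ Poisson(λ)`. -/
noncomputable def poissonSteinSol (lam : ℝ) (m : ℕ) : ℕ → ℝ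
  | 0 => 0
  | j + 1 => poissonProb lam m / (lam * poissonProb lam j) *
      ((if m ≤ j then 1 else 0) - poissonCDF lam j)

lemma poissonSteinSol_stein (hlam : 0 < lam) (m j : ℕ) :
    lam * poissonSteinSol lam m (j + 1) - j * poissonSteinSol lam m j
      = (if j = m then 1 else 0) - poissonProb lam m := by
  have hp := poissonProb_pos hlam
  cases j with
  | zero =>
    have h0 := (hp 0).ne'
    simp only [poissonSteinSol, poissonCDF, zero_add, range_one, sum_singleton, Nat.cast_zero,
      zero_mul, sub_zero, Nat.le_zero, eq_comm (a := 0)]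
    field_simp
    split_ifs with hm
    · subst hm; ring
    · ring
  | succ j =>
    have hrec := succ_mul_poissonProb_succ lam j
    have h0 := (hp j).ne'
    have h1 := (hp (j + 1)).ne'
    simp only [poissonSteinSol, poissonCDF_succ]
    rcases lt_trichotomy m (j + 1) with hm | rfl | hm
    · rw [if_pos (by omega), if_pos (by omega), if_neg (by omega)]
      field_simp
      push_cast
      linear_combination (-poissonProb lam m * (1 - poissonCDF lam j)) * hrec
    · rw [if_pos le_rfl, if_neg (by omega), if_pos rfl]
      field_simp
      push_cast
      linear_combination (poissonCDF lam j) * hrec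
    · rw [if_neg (by omega), if_neg (by omega), if_neg (by omega)]
      field_simp
      push_cast
      linear_combination (poissonProb lam m * poissonCDF lam j) * hrec

lemma poissonSteinSol_add_one (hlam : 0 < lam) (m j : ℕ) :
    poissonSteinSol lam m (j + 1) = poissonProb lam m / (lam ^ 2 * poissonProb lam j) *
      (lam * ((if m ≤ j then 1 else 0) - poissonCDF lam j)) := by
  have := (poissonProb_pos hlam j).ne'
  rw [poissonSteinSol]
  field_simp

lemma poissonSteinSol_add_two (hlam : 0 < lam) (m j : ℕ) :
    poissonSteinSol lam m (j + 2) = poissonProb lam m / (lam ^ 2 * poissonProb lam j) *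
      ((j + 1) * ((if m ≤ j + 1 then 1 else 0) - poissonCDF lam (j + 1))) := by
  have hrec := succ_mul_poissonProb_succ lam j
  have := (poissonProb_pos hlam j).ne'
  have := (poissonProb_pos hlam (j + 1)).ne'
  rw [poissonSteinSol]
  field_simp
  linear_combination -(poissonProb lam m *
    ((if m ≤ j + 1 then 1 else 0) - poissonCDF lam (j + 1))) * hrec

lemma poissonSteinSol_add_two_le (hlam : 0 < lam) {m j : ℕ} (hm : m ≠ j + 1) :
    poissonSteinSol lam m (j + 2) ≤ poissonSteinSol lam m (j + 1) := by
  rw [poissonSteinSol_add_two hlam, poissonSteinSol_add_one hlam]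
  refine mul_le_mul_of_nonneg_left ?_ (div_nonneg (poissonProb_nonneg hlam.le m)
    (mul_nonneg (sq_nonneg lam) (poissonProb_nonneg hlam.le j)))
  rcases le_or_gt m j with hmj | hmj
  · rw [if_pos hmj, if_pos (by omega)]
    exact succ_mul_one_sub_poissonCDF_le hlam.le j
  · rw [if_neg (by omega), if_neg (by omega)]
    nlinarith [mul_poissonCDF_le hlam.le j, poissonProb_nonneg hlam.le 0]

lemma poissonSteinSol_self_add_two_sub_le (hlam : 0 < lam) (j : ℕ) :
    poissonSteinSol lam (j + 1) (j + 2) - poissonSteinSol lam (j + 1) (j + 1)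
      ≤ (1 - exp (-lam)) / lam := by
  rw [poissonSteinSol_add_two hlam, poissonSteinSol_add_one hlam, if_pos le_rfl,
    if_neg (by omega), ← poissonProb_zero_right]
  set c := poissonProb lam (j + 1) / (lam ^ 2 * poissonProb lam j)
  have hc : c * (j + 1) = 1 / lam := by
    have := (poissonProb_pos hlam j).ne'
    simp only [c]
    field_simp
    linear_combination succ_mul_poissonProb_succ lam j
  have hc0 : 0 ≤ c := div_nonneg (poissonProb_nonneg hlam.le _)
    (mul_nonneg (sq_nonneg lam) (poissonProb_nonneg hlam.le j))
  calc c * ((j + 1) * (1 - poissonCDF lam (j + 1))) - c * (lam * (0 - poissonCDF lam j))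
      = c * ((j + 1) * (1 - poissonCDF lam (j + 1)) + lam * poissonCDF lam j) := by ring
    _ ≤ c * ((j + 1) * (1 - poissonProb lam 0)) := by
        gcongr
        linarith [mul_poissonCDF_le hlam.le j]
    _ = (1 - poissonProb lam 0) / lam := by rw [← mul_assoc, hc, one_div_mul_eq_div]

noncomputable def poissonSteinSolSet (lam : ℝ) (A : Finset ℕ) (j : ℕ) : ℝ :=
  ∑ m ∈ A, poissonSteinSol lam m j

lemma poissonSteinSolSet_stein (hlam : 0 < lam) (A : Finset ℕ) (j : ℕ) :
    lam * poissonSteinSolSet lam A (j + 1) - j * poissonSteinSolSet lam A j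
      = (if j ∈ A then 1 else 0) - ∑ m ∈ A, poissonProb lam m := by
  simp only [poissonSteinSolSet, mul_sum, ← sum_sub_distrib, poissonSteinSol_stein hlam]
  rw [sum_sub_distrib, sum_ite_eq]

lemma poissonSteinSolSet_add_two_sub_le (hlam : 0 < lam) (A : Finset ℕ) (j : ℕ) :
    poissonSteinSolSet lam A (j + 2) - poissonSteinSolSet lam A (j + 1)
      ≤ (1 - exp (-lam)) / lam := by
  classical
  rw [poissonSteinSolSet, poissonSteinSolSet, ← sum_sub_distrib,
    ← sum_filter_add_sum_filter_not A (· = j + 1), filter_eq' A]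
  have hrest : ∑ m ∈ A with ¬m = j + 1,
      (poissonSteinSol lam m (j + 2) - poissonSteinSol lam m (j + 1)) ≤ 0 :=
    sum_nonpos fun m hm => sub_nonpos.2 (poissonSteinSol_add_two_le hlam (mem_filter.1 hm).2)
  have hδ : 0 ≤ (1 - exp (-lam)) / lam := by
    have := exp_le_one_iff.2 (neg_nonpos.2 hlam.le)
    exact div_nonneg (by linarith) hlam.le
  split_ifs
  · rw [sum_singleton]
    linarith [poissonSteinSol_self_add_two_sub_le hlam j]
  · rw [sum_empty, zero_add]
    exact hrest.trans hδ

/-- `poissonBinomialExpectation L h = 𝔼 h(S)` where `S` is a sum of independent Bernoulli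
variables whose parameters are the entries of `L`. -/
noncomputable def poissonBinomialExpectation : List ℝ → (ℕ → ℝ) →ₗ[ℝ] ℝ
  | [] => LinearMap.proj 0
  | p :: l => (1 - p) • poissonBinomialExpectation l +
      p • (poissonBinomialExpectation l).comp (LinearMap.funLeft ℝ ℝ Nat.succ)

local notation "𝔼[" L "]" => poissonBinomialExpectation L

@[simp]
lemma poissonBinomialExpectation_nil (h : ℕ → ℝ) : 𝔼[[]] h = h 0 := rfl

lemma poissonBinomialExpectation_cons (p : ℝ) (l : List ℝ) (h : ℕ → ℝ) :
    𝔼[p :: l] h = (1 - p) * 𝔼[l] h + p * 𝔼[l] (fun k => h (k + 1)) := rfl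

lemma poissonBinomialExpectation_const (L : List ℝ) (c : ℝ) : 𝔼[L] (fun _ => c) = c := by
  induction L with
  | nil => rfl
  | cons p l ih => rw [poissonBinomialExpectation_cons, ih]; ring

lemma poissonBinomialExpectation_mono {L : List ℝ} (hL : ∀ p ∈ L, p ∈ Set.Icc (0 : ℝ) 1)
    {h h' : ℕ → ℝ} (hh : h ≤ h') : 𝔼[L] h ≤ 𝔼[L] h' := by
  induction L generalizing h h' with
  | nil => exact hh 0
  | cons p l ih =>
    obtain ⟨hp0, hp1⟩ := hL p List.mem_cons_self
    have hl : ∀ q ∈ l, q ∈ Set.Icc (0 : ℝ) 1 := fun q hq => hL q (List.mem_cons_of_mem p hq)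
    rw [poissonBinomialExpectation_cons, poissonBinomialExpectation_cons]
    exact add_le_add (mul_le_mul_of_nonneg_left (ih hl hh) (sub_nonneg.2 hp1))
      (mul_le_mul_of_nonneg_left (ih hl fun k => hh (k + 1)) hp0)

/-- One-sided form of the identity `𝔼[λ g(S+1) - S g(S)] = ∑ᵢ pᵢ² 𝔼[g(Sᵢ+2) - g(Sᵢ+1)]`, where
`Sᵢ` is `S` with its `i`-th summand removed. -/
theorem poissonBinomialExpectation_stein_le {L : List ℝ} (hL : ∀ p ∈ L, p ∈ Set.Icc (0 : ℝ) 1)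
    {g : ℕ → ℝ} {δ : ℝ} (hg : ∀ k, g (k + 2) - g (k + 1) ≤ δ) :
    𝔼[L] (fun k => L.sum * g (k + 1) - k * g k) ≤ δ * (L.map (· ^ 2)).sum := by
  induction L generalizing g with
  | nil => simp
  | cons p l ih =>
    obtain ⟨hp0, hp1⟩ := hL p List.mem_cons_self
    have hl : ∀ q ∈ l, q ∈ Set.Icc (0 : ℝ) 1 := fun q hq => hL q (List.mem_cons_of_mem p hq)
    have hsplit : 𝔼[p :: l] (fun k => (p :: l).sum * g (k + 1) - k * g k)
        = (1 - p) * 𝔼[l] (fun k => l.sum * g (k + 1) - k * g k)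
          + p * 𝔼[l] (fun k => l.sum * g (k + 2) - k * g (k + 1))
          + p ^ 2 * 𝔼[l] (fun k => g (k + 2) - g (k + 1)) := by
      have hzero : (1 - p) • (fun k => (p :: l).sum * g (k + 1) - k * g k)
          + p • (fun k => (p :: l).sum * g (k + 2) - (k + 1 : ℕ) * g (k + 1))
          - ((1 - p) • (fun k => l.sum * g (k + 1) - k * g k)
            + p • (fun k => l.sum * g (k + 2) - k * g (k + 1))
            + p ^ 2 • (fun k => g (k + 2) - g (k + 1))) = 0 := by
        funext k
        simp only [List.sum_cons, Pi.add_apply, Pi.sub_apply, Pi.smul_apply, smul_eq_mul,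
          Pi.zero_apply]
        push_cast
        ring
      have := congrArg 𝔼[l] hzero
      simp only [map_sub, map_add, map_smul, map_zero, smul_eq_mul] at this
      rw [poissonBinomialExpectation_cons]
      linear_combination this
    have hΔ : 𝔼[l] (fun k => g (k + 2) - g (k + 1)) ≤ δ := by
      simpa only [poissonBinomialExpectation_const] using
        poissonBinomialExpectation_mono hl (h' := fun _ => δ) fun k => hg k
    have h1 := ih hl hg
    have h2 := ih hl (g := fun k => g (k + 1)) fun k => hg (k + 1)
    rw [hsplit, List.map_cons, List.sum_cons]
    linarith [mul_le_mul_of_nonneg_left h1 (sub_nonneg.2 hp1),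
      mul_le_mul_of_nonneg_left h2 hp0, mul_le_mul_of_nonneg_left hΔ (sq_nonneg p)]

theorem sum_poissonBinomialExpectation_sub_poissonProb_le {L : List ℝ}
    (hL : ∀ p ∈ L, p ∈ Set.Icc (0 : ℝ) 1) (hs : 0 < L.sum) (A : Finset ℕ) :
    ∑ k ∈ A, (𝔼[L] (({k} : Set ℕ).indicator 1) - poissonProb L.sum k)
      ≤ (1 - exp (-L.sum)) / L.sum * (L.map (· ^ 2)).sum := by
  have hstein : (fun j : ℕ => L.sum * poissonSteinSolSet L.sum A (j + 1)
      - j * poissonSteinSolSet L.sum A j)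
        = (∑ k ∈ A, ({k} : Set ℕ).indicator 1) - fun _ => ∑ k ∈ A, poissonProb L.sum k := by
    funext j
    simp [poissonSteinSolSet_stein hs]
  have := poissonBinomialExpectation_stein_le hL (poissonSteinSolSet_add_two_sub_le hs A)
  rwa [hstein, map_sub, map_sum, poissonBinomialExpectation_const, ← sum_sub_distrib] at this

/-- Since `∑ (aᵢ - bᵢ) = 0`, half the `ℓ¹` distance is `∑ (aᵢ - bᵢ)⁺`, a supremum of finite sums. -/
lemma half_tsum_abs_sub_le {ι : Type*} {a b : ι → ℝ} {c B : ℝ} (ha : HasSum a c) (hb : HasSum b c)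
    (hB : ∀ A : Finset ι, ∑ i ∈ A, (a i - b i) ≤ B) : 1 / 2 * ∑' i, |a i - b i| ≤ B := by
  classical
  have hd : HasSum (fun i => a i - b i) 0 := by simpa using ha.sub hb
  have hmax (x : ℝ) : max x 0 = if 0 < x then x else 0 := by
    split_ifs with h
    · exact max_eq_left h.le
    · exact max_eq_right (not_lt.1 h)
  have hpos : Summable fun i => max (a i - b i) 0 := by
    refine ((hd.summable.add hd.summable.abs).div_const 2).congr fun i => ?_
    rcases le_total (a i - b i) 0 with h | h
    · simp [abs_of_nonpos h, max_eq_right h]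
    · simp [abs_of_nonneg h, max_eq_left h]
  have habs (i : ι) : |a i - b i| = 2 * max (a i - b i) 0 - (a i - b i) := by
    rcases le_total (a i - b i) 0 with h | h
    · rw [abs_of_nonpos h, max_eq_right h]; ring
    · rw [abs_of_nonneg h, max_eq_left h]; ring
  have hle : ∑' i, max (a i - b i) 0 ≤ B := hpos.tsum_le_of_sum_le fun A => by
    simpa only [hmax, ← sum_filter] using hB (A.filter fun i => 0 < a i - b i)
  rw [tsum_congr habs, hpos.mul_left 2 |>.tsum_sub hd.summable, tsum_mul_left, hd.tsum_eq]
  linarith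

section Probability

open MeasureTheory ProbabilityTheory

variable {Ω ι : Type*} [MeasurableSpace Ω] {μ : Measure Ω} [IsProbabilityMeasure μ]

lemma hasSum_measureReal_preimage_singleton {f : Ω → ℕ} (hf : Measurable f) :
    HasSum (fun k => μ.real (f ⁻¹' {k})) 1 := by
  have hU : ∑' k, μ (f ⁻¹' {k}) = 1 := by
    rw [← measure_iUnion (fun i j hij => Set.disjoint_singleton.2 hij |>.preimage f)
      fun k => hf (measurableSet_singleton k)]
    simp [← Set.preimage_iUnion, Set.iUnion_of_singleton]
  have hfin : ∑' k, μ (f ⁻¹' {k}) ≠ ⊤ := by rw [hU]; exact ENNReal.one_ne_top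
  simpa [measureReal_def, ← ENNReal.tsum_toReal_eq fun k => measure_ne_top μ _, hU] using
    ENNReal.hasSum_toReal hfin

lemma measureReal_add_preimage {U V : Ω → ℕ} (hU : Measurable U) (hV : Measurable V)
    (hUV : IndepFun U V μ) (hU1 : ∀ ω, U ω ≤ 1) (B : Set ℕ) :
    μ.real ((U + V) ⁻¹' B) = (1 - μ.real (U ⁻¹' {1})) * μ.real (V ⁻¹' B)
      + μ.real (U ⁻¹' {1}) * μ.real (V ⁻¹' ((· + 1) ⁻¹' B)) := by
  have hsplit : (U + V) ⁻¹' B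
      = U ⁻¹' {1}ᶜ ∩ V ⁻¹' B ∪ U ⁻¹' {1} ∩ V ⁻¹' ((· + 1) ⁻¹' B) := by
    ext ω
    have := hU1 ω
    rcases Nat.le_one_iff_eq_zero_or_eq_one.1 this with h | h <;>
      simp [h, add_comm]
  have hmul (S B' : Set ℕ) : μ.real (U ⁻¹' S ∩ V ⁻¹' B') = μ.real (U ⁻¹' S) * μ.real (V ⁻¹' B') := by
    simp only [measureReal_def, hUV.measure_inter_preimage_eq_mul S B' (.of_discrete) (.of_discrete),
      ENNReal.toReal_mul]
  rw [hsplit, measureReal_union (Set.disjoint_left.2 fun ω h1 h2 => h1.1 h2.1)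
      ((hU (.of_discrete)).inter (hV (.of_discrete))), hmul, hmul, Set.preimage_compl,
    probReal_compl_eq_one_sub (hU (.of_discrete))]

theorem measureReal_sum_preimage_eq_poissonBinomialExpectation {X : ι → Ω → ℕ}
    (hXm : ∀ i, Measurable (X i)) (hX : iIndepFun X μ) (hX01 : ∀ i ω, X i ω ≤ 1)
    (s : Finset ι) (B : Set ℕ) :
    μ.real ((∑ i ∈ s, X i) ⁻¹' B)
      = 𝔼[s.toList.map fun i => μ.real (X i ⁻¹' {1})] (B.indicator 1) := by
  classical
  suffices h : ∀ l : List ι, l.Nodup → ∀ B : Set ℕ, μ.real ((∑ i ∈ l.toFinset, X i) ⁻¹' B)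
      = 𝔼[l.map fun i => μ.real (X i ⁻¹' {1})] (B.indicator 1) by
    simpa using h s.toList s.nodup_toList B
  intro l hl
  induction l with
  | nil => intro B; by_cases h : 0 ∈ B <;> simp [h, Pi.zero_def]
  | cons a l ih =>
    intro B
    obtain ⟨ha, hl⟩ := List.nodup_cons.1 hl
    have hindep : IndepFun (X a) (∑ i ∈ l.toFinset, X i) μ :=
      (hX.indepFun_finsetSum_of_notMem hXm (List.mem_toFinset.not.2 ha)).symm
    rw [List.toFinset_cons, sum_insert (List.mem_toFinset.not.2 ha),
      measureReal_add_preimage (hXm a) (by fun_prop) hindep (hX01 a),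
      ih hl, ih hl, List.map_cons, poissonBinomialExpectation_cons]
    rfl

theorem half_tsum_abs_measureReal_sub_poissonProb_le {X : ι → Ω → ℕ}
    (hXm : ∀ i, Measurable (X i)) (hX : iIndepFun X μ) (hX01 : ∀ i ω, X i ω ≤ 1)
    (s : Finset ι) (hs : 0 < ∑ i ∈ s, μ.real (X i ⁻¹' {1})) :
    1 / 2 * ∑' k, |μ.real ((∑ i ∈ s, X i) ⁻¹' {k})
        - poissonProb (∑ i ∈ s, μ.real (X i ⁻¹' {1})) k|
      ≤ (1 - exp (-∑ i ∈ s, μ.real (X i ⁻¹' {1}))) / (∑ i ∈ s, μ.real (X i ⁻¹' {1}))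
        * ∑ i ∈ s, μ.real (X i ⁻¹' {1}) ^ 2 := by
  set L := s.toList.map fun i => μ.real (X i ⁻¹' {1})
  have hL : ∀ p ∈ L, p ∈ Set.Icc (0 : ℝ) 1 := by
    simp only [L, List.mem_map]
    rintro _ ⟨i, -, rfl⟩
    exact ⟨measureReal_nonneg, measureReal_le_one⟩
  have hsum : L.sum = ∑ i ∈ s, μ.real (X i ⁻¹' {1}) := sum_map_toList s _
  have hsq : (L.map (· ^ 2)).sum = ∑ i ∈ s, μ.real (X i ⁻¹' {1}) ^ 2 := by
    rw [List.map_map]; exact sum_map_toList s _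
  have hBH := sum_poissonBinomialExpectation_sub_poissonProb_le hL (hsum ▸ hs)
  rw [hsum, hsq] at hBH
  refine half_tsum_abs_sub_le (hasSum_measureReal_preimage_singleton (by fun_prop))
    (hasSum_poissonProb _) fun A => ?_
  simp only [measureReal_sum_preimage_eq_poissonBinomialExpectation hXm hX hX01]
  exact hBH A

end Probability

lemma one_sub_exp_neg_div_le {x : ℝ} (hx : 0 < x) : (1 - exp (-x)) / x ≤ 2 / (1 + x) := by
  rw [div_le_div_iff₀ hx (by linarith)]
  nlinarith [add_one_le_exp (-x), exp_pos (-x)]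

lemma one_div_sub_one_sq_le {q : ℝ} (hq : 3 ≤ q) : (1 / (q - 1)) ^ 2 ≤ 9 / 4 * (1 / q ^ 2) := by
  rw [div_pow, one_pow, ← div_eq_mul_one_div, div_le_div_iff₀ (by nlinarith) (by positivity)]
  nlinarith

end SteinChen

open MeasureTheory ProbabilityTheory Finset SteinChen

/-- Poisson approximation of `R_T = #{q ∈ T : W_q ≥ 1}`: with
`H₁(T) = Σ_{q∈T} 1/(q-1)` and `H₂(T) = Σ_{q∈T} 1/q²`, the total variation
distance between `R_T` and `Poisson(H₁(T))` is `≪ H₂(T)/(1 + H₁(T))`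
with an absolute implied constant. -/
theorem stmt_15 :
    ∃ C : ℝ, 0 < C ∧
    ∀ (T : Finset ℕ), (∀ q ∈ T, Nat.Prime q ∧ 3 ≤ q) →
    ∀ (Ω : Type) (_ : MeasurableSpace Ω) (μ : Measure Ω),
      IsProbabilityMeasure μ →
    ∀ (W : ℕ → Ω → ℕ), (∀ q, Measurable (W q)) →
      iIndepFun W μ →
      (∀ q ∈ T, (μ ((W q) ⁻¹' {0})).toReal = 1 - 1 / ((q : ℝ) - 1)) →
      (∀ q ∈ T, ∀ v : ℕ, 1 ≤ v →
        (μ ((W q) ⁻¹' {v})).toReal = 1 / (q : ℝ) ^ v) →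
      (1 / 2) * (∑' k : ℕ,
          |(μ {ω | (T.filter (fun q => 1 ≤ W q ω)).card = k}).toReal
            - Real.exp (-(∑ q ∈ T, 1 / ((q : ℝ) - 1)))
                * (∑ q ∈ T, 1 / ((q : ℝ) - 1)) ^ k / (Nat.factorial k)|)
        ≤ C * (∑ q ∈ T, 1 / (q : ℝ) ^ 2)
            / (1 + ∑ q ∈ T, 1 / ((q : ℝ) - 1)) := by
  refine ⟨9 / 2, by norm_num, fun T hT Ω _ μ _ W hWm hW hW0 _ => ?_⟩
  rcases T.eq_empty_or_nonempty with rfl | hTne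
  · suffices h : ∀ k : ℕ, (μ {ω : Ω | 0 = k}).toReal - 0 ^ k / k.factorial = 0 by simp [h]
    rintro (_ | k) <;> simp
  have hq3 (q : ℕ) (hq : q ∈ T) : (3 : ℝ) ≤ q := by exact_mod_cast (hT q hq).2
  let X : ℕ → Ω → ℕ := fun q => (fun n => if 1 ≤ n then 1 else 0) ∘ W q
  have hp (q : ℕ) (hq : q ∈ T) : μ.real (X q ⁻¹' {1}) = 1 / ((q : ℝ) - 1) := by
    have : X q ⁻¹' {1} = (W q ⁻¹' {0})ᶜ := by ext ω; simp [X, Nat.one_le_iff_ne_zero]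
    rw [this, probReal_compl_eq_one_sub (hWm q (measurableSet_singleton 0)), measureReal_def,
      hW0 q hq, sub_sub_cancel]
  have hR (k : ℕ) : {ω | (T.filter fun q => 1 ≤ W q ω).card = k} = (∑ q ∈ T, X q) ⁻¹' {k} := by
    ext ω
    simp only [Set.mem_ofPred_eq, Set.mem_preimage, Set.mem_singleton_iff, Finset.sum_apply,
      Function.comp_apply, card_filter, X]
  have hBH := half_tsum_abs_measureReal_sub_poissonProb_le (X := X)
    (fun q => Measurable.of_discrete.comp (hWm q)) (hW.comp _ fun _ => .of_discrete)
    (fun q ω => by dsimp [X]; split_ifs <;> omega) T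
  rw [sum_congr rfl hp] at hBH
  have hlam : 0 < ∑ q ∈ T, 1 / ((q : ℝ) - 1) :=
    sum_pos (fun q hq => one_div_pos.2 (by linarith [hq3 q hq])) hTne
  simp_rw [hR, ← measureReal_def]
  calc _ ≤ _ := hBH hlam
    _ ≤ 2 / (1 + ∑ q ∈ T, 1 / ((q : ℝ) - 1)) * (9 / 4 * ∑ q ∈ T, 1 / (q : ℝ) ^ 2) := by
      refine mul_le_mul (one_sub_exp_neg_div_le hlam) ?_ (sum_nonneg fun _ _ => sq_nonneg _)
        (by positivity)
      rw [mul_sum]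
      exact sum_le_sum fun q hq => hp q hq ▸ one_div_sub_one_sq_le (hq3 q hq)
    _ = _ := by ring
end
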